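/- arXiv:2603.05331 — 6 statements merged into one kernel-verified Lean document; each statement's English description precedes it below -/
import Mathlib

section
/- Let (N,M0) be a b-bounded system, let M ∈ reach(N,M0), let X ⊆ T be a non-empty set of transitions, and let ρ1,…,ρm ∈ T* be firing sequences such that (N,M)[ρ1ρ2⋯ρm⟩ and each ρi contains every transition of X exactly once and contains no transition outside X. If m ≥ b+1, then firing each block leaves the marking unchanged: (N,M)[ρ1⋯ρi⟩(N,M) for every 1 ≤ i ≤ m. -/
/-- A Petri net over places `P`, transitions `T`, and alphabet `A`.
`pre p t` means there is an arc from place `p` to transition `t`;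
`post t p` means there is an arc from transition `t` to place `p`;
`label t = none` means that `t` is silent (labeled `τ`). -/
structure PetriNet (P T A : Type) where
  pre : P → T → Prop
  post : T → P → Prop
  label : T → Option A

namespace PetriNet

variable {P T A : Type}

/-- A transition is enabled if all of its input places are marked. -/
def Enabled (N : PetriNet P T A) (M : P → ℕ) (t : T) : Prop :=
  ∀ p, N.pre p t → 0 < M p

/-- The marking obtained from `M` by firing the transition `t`. -/
noncomputable def fire (N : PetriNet P T A) (M : P → ℕ) (t : T) : P → ℕ :=
  fun p =>
    letI := Classical.propDecidable
    if N.pre p t ∧ ¬N.post t p then M p - 1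
    else if ¬N.pre p t ∧ N.post t p then M p + 1
    else M p

/-- `Fires N M σ M'`: the firing sequence `σ` is enabled at `M` and leads to `M'`,
written `(N,M)[σ⟩(N,M')`. -/
inductive Fires (N : PetriNet P T A) : (P → ℕ) → List T → (P → ℕ) → Prop
  | nil (M : P → ℕ) : Fires N M [] M
  | cons {M M' : P → ℕ} {t : T} {σ : List T} :
      N.Enabled M t → Fires N (N.fire M t) σ M' → Fires N M (t :: σ) M'

/-- The set of markings reachable from `M0`. -/
def reach (N : PetriNet P T A) (M0 : P → ℕ) : Set (P → ℕ) :=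
  {M | ∃ σ : List T, Fires N M0 σ M}

/-- A system is `b`-bounded if every reachable marking has at most `b` tokens on each place. -/
def Bounded (N : PetriNet P T A) (M0 : P → ℕ) (b : ℕ) : Prop :=
  ∀ M ∈ reach N M0, ∀ p, M p ≤ b

/-- A system is live if from every reachable marking every transition can be enabled again. -/
def Live (N : PetriNet P T A) (M0 : P → ℕ) : Prop :=
  ∀ M ∈ reach N M0, ∀ t : T, ∃ M' ∈ reach N M, N.Enabled M' t

/-- Free choice: any two transitions have equal or disjoint sets of input places. -/
def FreeChoice (N : PetriNet P T A) : Prop :=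
  ∀ t t' : T, (∀ p, N.pre p t ↔ N.pre p t') ∨ ∀ p, ¬(N.pre p t ∧ N.pre p t')

/-- A firing sequence is biased if any two distinct transitions occurring in it
have disjoint sets of input places. -/
def Biased (N : PetriNet P T A) (σ : List T) : Prop :=
  ∀ t ∈ σ, ∀ t' ∈ σ, t ≠ t' → ∀ p, ¬(N.pre p t ∧ N.pre p t')

/-- Undirected adjacency of the underlying bipartite graph. -/
def Adj (N : PetriNet P T A) : P ⊕ T → P ⊕ T → Prop
  | Sum.inl p, Sum.inr t => N.pre p t ∨ N.post t p
  | Sum.inr t, Sum.inl p => N.pre p t ∨ N.post t p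
  | _, _ => False

/-- The underlying graph of the net is weakly connected. -/
def WeaklyConnected (N : PetriNet P T A) : Prop :=
  ∀ x y : P ⊕ T, Relation.ReflTransGen N.Adj x y

end PetriNet

open PetriNet

/-- An accepting system: a Petri net with an initial and a final marking. -/
structure AcceptingSystem (P T A : Type) where
  net : PetriNet P T A
  init : P → ℕ
  final : P → ℕ

/-- A complete firing sequence leads from the initial to the final marking. -/
def CompleteFiring {P T A : Type} (S : AcceptingSystem P T A) (σ : List T) : Prop :=
  Fires S.net S.init σ S.final

/-- A move: `none` in a component stands for the no-move symbol `≫`. -/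
abbrev Move (A T : Type) := Option A × Option T

/-- Legal moves: synchronous moves, log moves, and model moves. -/
def LegalMove {P T A : Type} (N : PetriNet P T A) : Move A T → Prop
  | (some a, some t) => N.label t = some a
  | (some _, none) => True
  | (none, some _) => True
  | (none, none) => False

/-- `γ` is an alignment between the trace `σ` and the accepting system `S`. -/
def IsAlignment {P T A : Type} (S : AcceptingSystem P T A) (σ : List A)
    (γ : List (Move A T)) : Prop :=
  (∀ m ∈ γ, LegalMove S.net m) ∧
  γ.filterMap Prod.fst = σ ∧
  CompleteFiring S (γ.filterMap Prod.snd)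

/-- The cost of an alignment with respect to a cost function. -/
def alignCost {A T : Type} (c : Move A T → NNReal) (γ : List (Move A T)) : NNReal :=
  (γ.map c).sum

namespace PetriNetAux

open PetriNet

variable {P T A : Type}

/-- Integer effect of a single transition on a place. -/
noncomputable def effT (N : PetriNet P T A) (t : T) (p : P) : ℤ :=
  letI := Classical.propDecidable
  if N.pre p t ∧ ¬N.post t p then -1
  else if ¬N.pre p t ∧ N.post t p then 1 else 0

/-- Integer effect of a list of transitions on a place. -/
noncomputable def effL (N : PetriNet P T A) (σ : List T) (p : P) : ℤ :=
  (σ.map (fun t => effT N t p)).sum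

lemma effL_nil (N : PetriNet P T A) (p : P) : effL N [] p = 0 := rfl

lemma effL_cons (N : PetriNet P T A) (t : T) (σ : List T) (p : P) :
    effL N (t :: σ) p = effT N t p + effL N σ p := by
  simp [effL]

lemma fire_int (N : PetriNet P T A) {M : P → ℕ} {t : T} (he : N.Enabled M t) (p : P) :
    ((N.fire M t p : ℕ) : ℤ) = (M p : ℤ) + effT N t p := by
  unfold PetriNet.fire effT
  classical
  split_ifs with h1 h2
  · have : 0 < M p := he p h1.1
    omega
  · push_cast; ring
  · simp

lemma fires_int {N : PetriNet P T A} {M M' : P → ℕ} {σ : List T}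
    (h : Fires N M σ M') (p : P) : ((M' p : ℕ) : ℤ) = (M p : ℤ) + effL N σ p := by
  induction h with
  | nil M => simp [effL_nil]
  | cons he hf ih =>
    rw [ih, fire_int _ he, effL_cons]; ring

lemma fires_append {N : PetriNet P T A} {M M' : P → ℕ} {σ τ : List T} :
    Fires N M (σ ++ τ) M' ↔ ∃ M'', Fires N M σ M'' ∧ Fires N M'' τ M' := by
  constructor
  · intro h
    induction σ generalizing M with
    | nil => exact ⟨M, Fires.nil M, h⟩
    | cons t σ ih =>
      cases h with
      | cons he hf =>
        obtain ⟨M'', h1, h2⟩ := ih hf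
        exact ⟨M'', Fires.cons he h1, h2⟩
  · rintro ⟨M'', h1, h2⟩
    induction σ generalizing M with
    | nil => cases h1; exact h2
    | cons t σ ih =>
      cases h1 with
      | cons he hf => exact Fires.cons he (ih hf)

lemma fires_det {N : PetriNet P T A} {M M1 M2 : P → ℕ} {σ : List T}
    (h1 : Fires N M σ M1) (h2 : Fires N M σ M2) : M1 = M2 := by
  induction σ generalizing M with
  | nil => cases h1; cases h2; rfl
  | cons t σ ih =>
    cases h1 with
    | cons he hf1 =>
      cases h2 with
      | cons he' hf2 => exact ih hf1 hf2

lemma effL_eq_of_count [DecidableEq T] {N : PetriNet P T A} {σ τ : List T}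
    (h : ∀ t, σ.count t = τ.count t) (p : P) : effL N σ p = effL N τ p := by
  have hperm : σ.Perm τ := List.perm_iff_count.mpr h
  exact (hperm.map _).sum_eq

end PetriNetAux

/-- In a `b`-bounded system, if `M` is reachable, `X ⊆ T` is non-empty, and
`ρ1, …, ρm` are blocks such that `(N,M)[ρ1⋯ρm⟩`, each block containing every transition of
`X` exactly once and no transition outside `X`, and `m ≥ b + 1`, then firing each block
leaves the marking unchanged: `(N,M)[ρ1⋯ρi⟩(N,M)` for every `1 ≤ i ≤ m`. -/

theorem repeated_blocks_invariant {P T A : Type} [Fintype P] [Fintype T] [DecidableEq T]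
    (N : PetriNet P T A) (M0 : P → ℕ) (b : ℕ)
    (hconn : N.WeaklyConnected) (hbdd : Bounded N M0 b)
    (M : P → ℕ) (hM : M ∈ reach N M0)
    (X : Finset T) (hX : X.Nonempty)
    (L : List (List T))
    (hblocks : ∀ l ∈ L, ∀ t : T, l.count t = if t ∈ X then 1 else 0)
    (hfire : ∃ M' : P → ℕ, Fires N M L.flatten M')
    (hm : b + 1 ≤ L.length) :
    ∀ i : ℕ, 1 ≤ i → i ≤ L.length → Fires N M (L.take i).flatten M := by
  classical
  obtain ⟨M', hM'⟩ := hfire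
  obtain ⟨σ0, hσ0⟩ := hM
  set d : P → ℤ := fun p => PetriNetAux.effL N X.toList p with hd
  -- every block has effect d
  have hblockeff : ∀ l ∈ L, ∀ p, PetriNetAux.effL N l p = d p := by
    intro l hl p
    refine PetriNetAux.effL_eq_of_count (fun t => ?_) p
    rw [hblocks l hl t]
    rw [List.Nodup.count X.nodup_toList]
    simp
  -- markings after each prefix
  have hpref : ∀ i, i ≤ L.length → ∃ Mi, Fires N M (L.take i).flatten Mi := by
    intro i hi
    have : L.flatten = (L.take i).flatten ++ (L.drop i).flatten := by
      rw [← List.flatten_append, List.take_append_drop]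
    rw [this] at hM'
    obtain ⟨Mi, h1, _⟩ := PetriNetAux.fires_append.mp hM'
    exact ⟨Mi, h1⟩
  choose Ms hMs using fun i (hi : i ≤ L.length) => hpref i hi
  -- value of prefix markings
  have hval : ∀ i (hi : i ≤ L.length), ∀ p, ((Ms i hi p : ℕ) : ℤ) = (M p : ℤ) + i * d p := by
    intro i
    induction i with
    | zero =>
      intro hi p
      have h0 : Fires N M ([] : List T) M := Fires.nil M
      have := PetriNetAux.fires_det (hMs 0 hi) (by simpa using h0)
      rw [this]; simp
    | succ i ih =>
      intro hi p
      have hi' : i ≤ L.length := Nat.le_of_succ_le hi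
      have hilt : i < L.length := hi
      have htake : L.take (i + 1) = L.take i ++ [L[i]] := by
        rw [List.take_succ, List.getElem?_eq_getElem hilt]
        rfl
      have hflat : (L.take (i + 1)).flatten = (L.take i).flatten ++ L[i] := by
        rw [htake, List.flatten_append]; simp
      have hfi := hMs (i + 1) hi
      rw [hflat] at hfi
      obtain ⟨Mmid, h1, h2⟩ := PetriNetAux.fires_append.mp hfi
      have hmid : Mmid = Ms i hi' := PetriNetAux.fires_det h1 (hMs i hi')
      subst hmid
      have := PetriNetAux.fires_int h2 p
      rw [this, ih hi' p, hblockeff L[i] (List.getElem_mem hilt) p]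
      push_cast
      ring
  -- prefix markings are reachable, hence bounded
  have hbd : ∀ i (hi : i ≤ L.length), ∀ p, Ms i hi p ≤ b := by
    intro i hi p
    refine hbdd _ ⟨σ0 ++ (L.take i).flatten, ?_⟩ p
    exact PetriNetAux.fires_append.mpr ⟨M, hσ0, hMs i hi⟩
  -- d = 0
  have hdzero : ∀ p, d p = 0 := by
    intro p
    have hMb : (M p : ℤ) ≤ b := by
      have := hbdd M ⟨σ0, hσ0⟩ p
      exact_mod_cast this
    have hfin := hval L.length le_rfl p
    have hfb : ((Ms L.length le_rfl p : ℕ) : ℤ) ≤ b := by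
      have := hbd L.length le_rfl p
      exact_mod_cast this
    have hfnn : (0 : ℤ) ≤ ((Ms L.length le_rfl p : ℕ) : ℤ) := Int.natCast_nonneg _
    have hmZ : (b : ℤ) + 1 ≤ (L.length : ℤ) := by exact_mod_cast hm
    rcases lt_trichotomy (d p) 0 with h | h | h
    · have h1 : d p ≤ -1 := by omega
      have : (L.length : ℤ) * d p ≤ (L.length : ℤ) * (-1) :=
        mul_le_mul_of_nonneg_left h1 (by positivity)
      linarith [hfin ▸ hfnn]
    · exact h
    · have h1 : (1 : ℤ) ≤ d p := by omega
      have : (L.length : ℤ) * 1 ≤ (L.length : ℤ) * d p :=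
        mul_le_mul_of_nonneg_left h1 (by positivity)
      have hMnn : (0 : ℤ) ≤ (M p : ℤ) := Int.natCast_nonneg _
      linarith [hfin ▸ hfb]
  -- conclude
  intro i _ hi
  have heq : Ms i hi = M := by
    funext p
    have := hval i hi p
    rw [hdzero p] at this
    have : ((Ms i hi p : ℕ) : ℤ) = (M p : ℤ) := by omega
    exact_mod_cast this
  have := hMs i hi
  rwa [heq] at this
end

section
/- Let (N,M0) be a system and let σ ∈ T* be a biased firing sequence with (N,M0)[σ⟩(N,M). Then there exists a permutation ρ = σ1σ2 of σ (i.e. ρ⃗ = σ⃗) such that (N,M0)[σ1σ2⟩(N,M), no transition occurs more than once in σ1, and every transition that occurs in σ2 also occurs in σ1, i.e. supp(σ⃗2) ⊆ supp(σ⃗1). -/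
open PetriNet

namespace PetriNet
variable {P T A : Type}

lemma fires_append {N : PetriNet P T A} :
    ∀ {α : List T} {M M1 : P → ℕ}, Fires N M α M1 → ∀ {β M2}, Fires N M1 β M2 →
      Fires N M (α ++ β) M2 := by
  intro α M M1 h
  induction h with
  | nil M => intro β M2 h2; simpa using h2
  | cons he hf ih => intro β M2 h2; exact Fires.cons he (ih h2)

lemma fires_split {N : PetriNet P T A} :
    ∀ (α : List T) {β : List T} {M M2 : P → ℕ}, Fires N M (α ++ β) M2 →
      ∃ M1, Fires N M α M1 ∧ Fires N M1 β M2 := by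
  intro α
  induction α with
  | nil => intro β M M2 h; exact ⟨M, Fires.nil M, h⟩
  | cons t α ih =>
    intro β M M2 h
    cases h with
    | cons he hf =>
      obtain ⟨M1, h1, h2⟩ := ih hf
      exact ⟨M1, Fires.cons he h1, h2⟩

lemma fire_ge {N : PetriNet P T A} {M : P → ℕ} {t : T} {p : P} (h : ¬ N.pre p t) :
    M p ≤ N.fire M t p := by
  simp only [fire]
  split_ifs with h1 h2
  · exact absurd h1.1 h
  · omega
  · omega

lemma fires_le {N : PetriNet P T A} {p : P} :
    ∀ {α : List T} {M M' : P → ℕ}, Fires N M α M' → (∀ u ∈ α, ¬N.pre p u) → M p ≤ M' p := by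
  intro α M M' h
  induction h with
  | nil => intro _; exact le_refl _
  | cons he hf ih =>
    intro hα
    exact le_trans (fire_ge (hα _ (List.mem_cons_self)))
      (ih fun u hu => hα u (List.mem_cons_of_mem _ hu))

lemma fires_pos {N : PetriNet P T A} {p : P} {u : T} :
    ∀ {α : List T} {M M' : P → ℕ}, Fires N M α M' → u ∈ α → N.post u p →
      (∀ u' ∈ α, ¬N.pre p u') → 0 < M' p := by
  intro α
  induction α with
  | nil => simp
  | cons t α ih =>
    intro M M' h hmem hpost hnp
    cases h with
    | cons he hf =>
      by_cases htu : u ∈ α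
      · exact ih hf htu hpost (fun u' h' => hnp u' (List.mem_cons_of_mem _ h'))
      · have hut : u = t := by
          rcases List.mem_cons.mp hmem with h | h
          · exact h
          · exact absurd h htu
        subst hut
        have hnu := hnp u (List.mem_cons_self)
        have h1 : N.fire M u p = M p + 1 := by
          simp [fire, hnu, hpost]
        have h2 := fires_le hf (fun u' h' => hnp u' (List.mem_cons_of_mem _ h'))
        omega

lemma swap {N : PetriNet P T A} {M : P → ℕ} {u t : T}
    (hdisj : ∀ p, ¬(N.pre p t ∧ N.pre p u))
    (hcond : ∀ p, N.pre p t → N.post u p → ¬N.pre p u → 0 < M p)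
    (hu : N.Enabled M u) (ht : N.Enabled (N.fire M u) t) :
    N.Enabled M t ∧ N.Enabled (N.fire M t) u ∧
      N.fire (N.fire M u) t = N.fire (N.fire M t) u := by
  refine ⟨?_, ?_, ?_⟩
  · intro p hpt
    have h1 := ht p hpt
    have h2 : ¬N.pre p u := fun hpu => hdisj p ⟨hpt, hpu⟩
    by_cases hq : N.post u p
    · exact hcond p hpt hq h2
    · have : N.fire M u p = M p := by simp [fire, h2, hq]
      omega
  · intro p hpu
    have h1 := hu p hpu
    have h2 : ¬N.pre p t := fun hpt => hdisj p ⟨hpt, hpu⟩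
    have := fire_ge (M := M) (t := t) (p := p) h2
    omega
  · funext p
    have h1 : N.pre p u → 0 < M p := hu p
    have h2 := hcond p
    have h3 := hdisj p
    by_cases hpt : N.pre p t <;> by_cases hqt : N.post t p <;>
      by_cases hpu : N.pre p u <;> by_cases hqu : N.post u p <;>
        simp_all [fire] <;> first | omega | (have := hcond p ‹N.pre p t› ‹N.post u p›; omega)

lemma moveLeft {N : PetriNet P T A} {t : T} :
    ∀ (β : List T) {M M' : P → ℕ},
      (∀ u ∈ β, ∀ p, ¬(N.pre p t ∧ N.pre p u)) →
      (∀ u ∈ β, ∀ p, N.pre p t → N.post u p → ¬N.pre p u → 0 < M p) →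
      Fires N M (β ++ [t]) M' → Fires N M (t :: β) M' := by
  intro β
  induction β with
  | nil => intro M M' _ _ h; simpa using h
  | cons u β ih =>
    intro M M' hd hc h
    cases h with
    | cons hu hf =>
      have hd' : ∀ v ∈ β, ∀ p, ¬(N.pre p t ∧ N.pre p v) :=
        fun v hv => hd v (List.mem_cons_of_mem _ hv)
      have hc' : ∀ v ∈ β, ∀ p, N.pre p t → N.post v p → ¬N.pre p v → 0 < N.fire M u p := by
        intro v hv p hpt hpv hnv
        have h1 := hc v (List.mem_cons_of_mem _ hv) p hpt hpv hnv
        have hge : M p ≤ N.fire M u p :=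
          fire_ge (fun hpu => hd u (List.mem_cons_self) p ⟨hpt, hpu⟩)
        omega
      have h2 := ih hd' hc' hf
      cases h2 with
      | cons ht hf2 =>
        obtain ⟨het, heu, heq⟩ := swap (hd u (List.mem_cons_self))
          (fun p hpt hpu hnu => hc u (List.mem_cons_self) p hpt hpu hnu) hu ht
        exact Fires.cons het (Fires.cons heu (heq ▸ hf2))

end PetriNet

/-- If `σ` is a biased firing sequence with `(N,M0)[σ⟩(N,M)`, then there is a permutation
`ρ = σ1 ++ σ2` of `σ` with `(N,M0)[σ1σ2⟩(N,M)` such that no transition occurs more than once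
in `σ1` and every transition occurring in `σ2` also occurs in `σ1`. -/
theorem biased_permute_once {P T A : Type} [Fintype P] [Fintype T]
    (N : PetriNet P T A) (M0 : P → ℕ)
    (hconn : N.WeaklyConnected)
    (σ : List T) (M : P → ℕ)
    (hbiased : N.Biased σ) (hfire : Fires N M0 σ M) :
    ∃ σ1 σ2 : List T,
      (σ1 ++ σ2).Perm σ ∧
      Fires N M0 (σ1 ++ σ2) M ∧
      σ1.Nodup ∧
      {t : T | t ∈ σ2} ⊆ {t : T | t ∈ σ1} := by
  induction σ using List.reverseRecOn generalizing M with
  | nil =>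
    cases hfire
    exact ⟨[], [], List.Perm.refl _, Fires.nil _, List.nodup_nil, fun x hx => absurd hx List.not_mem_nil⟩
  | append_singleton τ t ih =>
    have hbτ : N.Biased τ := fun a ha b hb hne p =>
      hbiased a (List.mem_append_left _ ha) b (List.mem_append_left _ hb) hne p
    obtain ⟨M1, hf1, hf2⟩ := PetriNet.fires_split τ hfire
    obtain ⟨τ1, τ2, hperm, hf, hnd, hsub⟩ := ih M1 hbτ hf1
    have hcomb : Fires N M0 (τ1 ++ (τ2 ++ [t])) M := by
      have := PetriNet.fires_append hf hf2
      rwa [List.append_assoc] at this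
    by_cases htm : t ∈ τ1
    · refine ⟨τ1, τ2 ++ [t], ?_, hcomb, hnd, ?_⟩
      · rw [← List.append_assoc]; exact hperm.append_right [t]
      · intro x hx
        rcases List.mem_append.mp hx with h | h
        · exact hsub h
        · rw [List.mem_singleton.mp h]; exact htm
    · have htτ : t ∉ τ := by
        intro ht
        rcases List.mem_append.mp (hperm.mem_iff.mpr ht) with h | h
        · exact htm h
        · exact htm (hsub h)
      have hmem : ∀ u ∈ τ2, u ∈ τ := fun u hu =>
        hperm.mem_iff.mp (List.mem_append_right _ hu)
      have hmem1 : ∀ u ∈ τ1, u ∈ τ := fun u hu =>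
        hperm.mem_iff.mp (List.mem_append_left _ hu)
      have htmem : t ∈ τ ++ [t] := List.mem_append_right _ (List.mem_singleton_self t)
      obtain ⟨M1', hfa, hfb⟩ := PetriNet.fires_split τ1 hcomb
      have hd : ∀ u ∈ τ2, ∀ p, ¬(N.pre p t ∧ N.pre p u) := by
        intro u hu p
        have huτ := hmem u hu
        exact hbiased t htmem u (List.mem_append_left _ huτ)
          (fun he => htτ (he ▸ huτ)) p
      have hc : ∀ u ∈ τ2, ∀ p, N.pre p t → N.post u p → ¬N.pre p u → 0 < M1' p := by
        intro u hu p hpt hpost _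
        refine PetriNet.fires_pos hfa (hsub hu) hpost ?_
        intro u' hu' hpu'
        have hu'τ := hmem1 u' hu'
        exact hbiased t htmem u' (List.mem_append_left _ hu'τ)
          (fun he => htτ (he ▸ hu'τ)) p ⟨hpt, hpu'⟩
      have hmove : Fires N M1' (t :: τ2) M := PetriNet.moveLeft τ2 hd hc hfb
      have htot : Fires N M0 ((τ1 ++ [t]) ++ τ2) M := by
        have := PetriNet.fires_append hfa hmove
        rwa [List.append_cons] at this
      refine ⟨τ1 ++ [t], τ2, ?_, htot, ?_, ?_⟩
      · have p1 : ((τ1 ++ [t]) ++ τ2).Perm ((τ1 ++ τ2) ++ [t]) := by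
          rw [List.append_assoc, List.append_assoc]
          exact List.perm_append_comm.append_left τ1
        exact p1.trans (hperm.append_right [t])
      · simp only [List.nodup_append, List.nodup_singleton, List.disjoint_singleton]
        exact ⟨hnd, trivial, fun a ha b hb hab => htm (by rw [List.mem_singleton.mp hb] at hab; rw [← hab]; exact ha)⟩
      · intro x hx
        exact List.mem_append_left _ (hsub hx)
end

section
/- For every trace σ ∈ Σ* and every accepting system S, the alignments between σ and S are exactly the complete firing sequences of the synchronous product T(σ)⊗S, read as sequences of moves: mapping each product transition (t1,t2) to the move whose first component is ℓ1(t1) if t1 ≠ ≫ and ≫ otherwise, and whose second component is t2, gives a bijection between the complete firing sequences of T(σ)⊗S and Γ_{σ,S}. -/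
open PetriNet

/-- Transitions of the synchronous product: synchronous pairs `(t1,t2)` with equal labels,
and the moves `(t1,≫)` and `(≫,t2)`, where `none` plays the role of `≫`. -/
def SyncTrans {P1 T1 P2 T2 A : Type} (N1 : PetriNet P1 T1 A) (N2 : PetriNet P2 T2 A) : Type :=
  {x : Option T1 × Option T2 //
    (∃ t1 t2, x = (some t1, some t2) ∧ N1.label t1 = N2.label t2) ∨
    (∃ t1, x = (some t1, none)) ∨ (∃ t2, x = (none, some t2))}

/-- The Petri net underlying the synchronous product of two nets. A product transition
inherits the arcs of its (non-`≫`) components. -/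
def syncProdNet {P1 T1 P2 T2 A : Type} (N1 : PetriNet P1 T1 A) (N2 : PetriNet P2 T2 A) :
    PetriNet (P1 ⊕ P2) (SyncTrans N1 N2) A where
  pre p t :=
    match p with
    | Sum.inl p1 => ∃ t1, t.val.1 = some t1 ∧ N1.pre p1 t1
    | Sum.inr p2 => ∃ t2, t.val.2 = some t2 ∧ N2.pre p2 t2
  post t p :=
    match p with
    | Sum.inl p1 => ∃ t1, t.val.1 = some t1 ∧ N1.post t1 p1
    | Sum.inr p2 => ∃ t2, t.val.2 = some t2 ∧ N2.post t2 p2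
  label t := t.val.1.bind N1.label

/-- The synchronous product of two accepting systems: places are the disjoint union of the
places, the initial (final) marking is the sum of the initial (final) markings. -/
def syncProd {P1 T1 P2 T2 A : Type}
    (S1 : AcceptingSystem P1 T1 A) (S2 : AcceptingSystem P2 T2 A) :
    AcceptingSystem (P1 ⊕ P2) (SyncTrans S1.net S2.net) A where
  net := syncProdNet S1.net S2.net
  init := Sum.elim S1.init S2.init
  final := Sum.elim S1.final S2.final
/-- The Petri net of the trace system of a trace `σ = ⟨a1,…,an⟩`: places `p0,…,pn`,
transitions `t1,…,tn` with label `ai`, and arcs `(p_{i−1},ti)` and `(ti,p_i)`. -/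
def traceNet {A : Type} (σ : List A) : PetriNet (Fin (σ.length + 1)) (Fin σ.length) A where
  pre p t := (p : ℕ) = (t : ℕ)
  post t p := (p : ℕ) = (t : ℕ) + 1
  label t := some (σ.get t)

/-- The trace system of a trace `σ`: one token on `p0` initially, one token on `pn` finally. -/
def traceSystem {A : Type} (σ : List A) :
    AcceptingSystem (Fin (σ.length + 1)) (Fin σ.length) A where
  net := traceNet σ
  init p := if (p : ℕ) = 0 then 1 else 0
  final p := if (p : ℕ) = σ.length then 1 else 0
namespace AlignAux

open PetriNet

variable {A P T : Type}

lemma fires_nil_eq {N : PetriNet P T A} {M M' : P → ℕ} (h : Fires N M [] M') : M = M' := by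
  cases h; rfl

lemma fires_cons_inv {N : PetriNet P T A} {M M' : P → ℕ} {t : T} {ρ : List T}
    (h : Fires N M (t :: ρ) M') : N.Enabled M t ∧ Fires N (N.fire M t) ρ M' := by
  cases h; exact ⟨‹_›, ‹_›⟩

/-- Marking of the trace net with a single token on place `i`. -/
def δ (σ : List A) (i : ℕ) : Fin (σ.length + 1) → ℕ := fun p => if (p : ℕ) = i then 1 else 0

lemma trace_enabled_iff (σ : List A) (i : ℕ) (t : Fin σ.length) :
    (traceNet σ).Enabled (δ σ i) t ↔ (t : ℕ) = i := by
  constructor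
  · intro h
    have := h ⟨(t : ℕ), t.isLt.trans (Nat.lt_succ_self _)⟩ rfl
    simp only [δ] at this
    split at this
    · assumption
    · omega
  · intro h p hp
    have hp' : (p : ℕ) = (t : ℕ) := hp
    simp [δ, hp', h]

lemma trace_fire (σ : List A) (i : ℕ) (t : Fin σ.length) (ht : (t : ℕ) = i) :
    (traceNet σ).fire (δ σ i) t = δ σ (i + 1) := by
  funext p
  simp only [PetriNet.fire, traceNet, δ, ht]
  split_ifs <;> omega

lemma trace_fires_val (σ : List A) :
    ∀ (ρ : List (Fin σ.length)) (i : ℕ), i ≤ σ.length →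
      Fires (traceNet σ) (δ σ i) ρ (δ σ σ.length) →
      ρ.map Fin.val = List.range' i (σ.length - i) := by
  intro ρ
  induction ρ with
  | nil =>
    intro i hi h
    have heq := fires_nil_eq h
    have := congrFun heq ⟨σ.length, Nat.lt_succ_self _⟩
    simp only [δ] at this
    have hin : i = σ.length := by split_ifs at this <;> omega
    simp [hin]
  | cons t ρ ih =>
    intro i hi h
    obtain ⟨hen, hf⟩ := fires_cons_inv h
    have ht : (t : ℕ) = i := (trace_enabled_iff σ i t).mp hen
    have hilt : i < σ.length := ht ▸ t.isLt
    rw [trace_fire σ i t ht] at hf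
    have := ih (i + 1) hilt hf
    obtain ⟨k, hk⟩ : ∃ k, σ.length - i = k + 1 := ⟨σ.length - (i + 1), by omega⟩
    have hk' : σ.length - (i + 1) = k := by omega
    rw [hk'] at this
    simp [this, ht, hk, List.range'_succ]

lemma trace_fires_get (σ : List A) :
    ∀ (ρ : List (Fin σ.length)) (i : ℕ), i ≤ σ.length →
      Fires (traceNet σ) (δ σ i) ρ (δ σ σ.length) →
      ρ.map σ.get = σ.drop i := by
  intro ρ
  induction ρ with
  | nil =>
    intro i hi h
    have heq := fires_nil_eq h
    have := congrFun heq ⟨σ.length, Nat.lt_succ_self _⟩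
    simp only [δ] at this
    have hin : i = σ.length := by split_ifs at this <;> omega
    simp [hin]
  | cons t ρ ih =>
    intro i hi h
    obtain ⟨hen, hf⟩ := fires_cons_inv h
    have ht : (t : ℕ) = i := (trace_enabled_iff σ i t).mp hen
    subst ht
    have hilt : (t : ℕ) < σ.length := t.isLt
    rw [trace_fire σ t t rfl] at hf
    have := ih ((t : ℕ) + 1) hilt hf
    rw [List.drop_eq_getElem_cons hilt]
    simp [this, List.get_eq_getElem]

variable {P1 T1 P2 T2 : Type} {N1 : PetriNet P1 T1 A} {N2 : PetriNet P2 T2 A}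

lemma prod_fire_inl (tr : SyncTrans N1 N2) (M : P1 ⊕ P2 → ℕ) (p1 : P1) :
    (syncProdNet N1 N2).fire M tr (Sum.inl p1) =
      (match tr.val.1 with
       | some t1 => N1.fire (fun q => M (Sum.inl q)) t1 p1
       | none => M (Sum.inl p1)) := by
  have hpre : ∀ t1, tr.val.1 = some t1 →
      ((syncProdNet N1 N2).pre (Sum.inl p1) tr ↔ N1.pre p1 t1) := by
    intro t1 h; simp [syncProdNet, h]
  have hpost : ∀ t1, tr.val.1 = some t1 →
      ((syncProdNet N1 N2).post tr (Sum.inl p1) ↔ N1.post t1 p1) := by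
    intro t1 h; simp [syncProdNet, h]
  cases h : tr.val.1 with
  | none =>
    have h1 : ¬ (syncProdNet N1 N2).pre (Sum.inl p1) tr := by
      rintro ⟨t1, ht, -⟩; rw [h] at ht; cases ht
    have h2 : ¬ (syncProdNet N1 N2).post tr (Sum.inl p1) := by
      rintro ⟨t1, ht, -⟩; rw [h] at ht; cases ht
    simp [PetriNet.fire, h1, h2]
  | some t1 =>
    simp only [PetriNet.fire]
    by_cases hA : N1.pre p1 t1 <;> by_cases hB : N1.post t1 p1 <;>
      simp [hpre t1 h, hpost t1 h, hA, hB]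

lemma prod_fire_inr (tr : SyncTrans N1 N2) (M : P1 ⊕ P2 → ℕ) (p2 : P2) :
    (syncProdNet N1 N2).fire M tr (Sum.inr p2) =
      (match tr.val.2 with
       | some t2 => N2.fire (fun q => M (Sum.inr q)) t2 p2
       | none => M (Sum.inr p2)) := by
  have hpre : ∀ t2, tr.val.2 = some t2 →
      ((syncProdNet N1 N2).pre (Sum.inr p2) tr ↔ N2.pre p2 t2) := by
    intro t2 h; simp [syncProdNet, h]
  have hpost : ∀ t2, tr.val.2 = some t2 →
      ((syncProdNet N1 N2).post tr (Sum.inr p2) ↔ N2.post t2 p2) := by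
    intro t2 h; simp [syncProdNet, h]
  cases h : tr.val.2 with
  | none =>
    have h1 : ¬ (syncProdNet N1 N2).pre (Sum.inr p2) tr := by
      rintro ⟨t2, ht, -⟩; rw [h] at ht; cases ht
    have h2 : ¬ (syncProdNet N1 N2).post tr (Sum.inr p2) := by
      rintro ⟨t2, ht, -⟩; rw [h] at ht; cases ht
    simp [PetriNet.fire, h1, h2]
  | some t2 =>
    simp only [PetriNet.fire]
    by_cases hA : N2.pre p2 t2 <;> by_cases hB : N2.post t2 p2 <;>
      simp [hpre t2 h, hpost t2 h, hA, hB]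

lemma prod_fires_inl {M M' : P1 ⊕ P2 → ℕ} {ρ : List (SyncTrans N1 N2)}
    (h : Fires (syncProdNet N1 N2) M ρ M') :
    Fires N1 (fun q => M (Sum.inl q)) (ρ.filterMap (·.val.1)) (fun q => M' (Sum.inl q)) := by
  induction h with
  | nil M => exact Fires.nil _
  | @cons M M' tr ρ hen hf ih =>
    cases h1 : tr.val.1 with
    | none =>
      have : (fun q => (syncProdNet N1 N2).fire M tr (Sum.inl q)) = fun q => M (Sum.inl q) := by
        funext q; rw [prod_fire_inl, h1]
      rw [this] at ih
      simpa [List.filterMap_cons, h1] using ih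
    | some t1 =>
      have hfe : (fun q => (syncProdNet N1 N2).fire M tr (Sum.inl q)) =
          N1.fire (fun q => M (Sum.inl q)) t1 := by
        funext q; rw [prod_fire_inl, h1]
      rw [hfe] at ih
      have hen1 : N1.Enabled (fun q => M (Sum.inl q)) t1 :=
        fun p1 hp => hen (Sum.inl p1) ⟨t1, h1, hp⟩
      simpa [List.filterMap_cons, h1] using Fires.cons hen1 ih

lemma prod_fires_inr {M M' : P1 ⊕ P2 → ℕ} {ρ : List (SyncTrans N1 N2)}
    (h : Fires (syncProdNet N1 N2) M ρ M') :
    Fires N2 (fun q => M (Sum.inr q)) (ρ.filterMap (·.val.2)) (fun q => M' (Sum.inr q)) := by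
  induction h with
  | nil M => exact Fires.nil _
  | @cons M M' tr ρ hen hf ih =>
    cases h1 : tr.val.2 with
    | none =>
      have : (fun q => (syncProdNet N1 N2).fire M tr (Sum.inr q)) = fun q => M (Sum.inr q) := by
        funext q; rw [prod_fire_inr, h1]
      rw [this] at ih
      simpa [List.filterMap_cons, h1] using ih
    | some t2 =>
      have hfe : (fun q => (syncProdNet N1 N2).fire M tr (Sum.inr q)) =
          N2.fire (fun q => M (Sum.inr q)) t2 := by
        funext q; rw [prod_fire_inr, h1]
      rw [hfe] at ih
      have hen2 : N2.Enabled (fun q => M (Sum.inr q)) t2 :=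
        fun p2 hp => hen (Sum.inr p2) ⟨t2, h1, hp⟩
      simpa [List.filterMap_cons, h1] using Fires.cons hen2 ih

lemma prod_enabled_elim {tr : SyncTrans N1 N2} {M1 : P1 → ℕ} {M2 : P2 → ℕ}
    (h1 : ∀ t1, tr.val.1 = some t1 → N1.Enabled M1 t1)
    (h2 : ∀ t2, tr.val.2 = some t2 → N2.Enabled M2 t2) :
    (syncProdNet N1 N2).Enabled (Sum.elim M1 M2) tr := by
  rintro (p1 | p2) hp
  · obtain ⟨t1, ht, hpre⟩ := hp; exact h1 t1 ht p1 hpre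
  · obtain ⟨t2, ht, hpre⟩ := hp; exact h2 t2 ht p2 hpre

lemma prod_fire_elim (tr : SyncTrans N1 N2) (M1 : P1 → ℕ) (M2 : P2 → ℕ) :
    (syncProdNet N1 N2).fire (Sum.elim M1 M2) tr =
      Sum.elim
        (match tr.val.1 with | some t1 => N1.fire M1 t1 | none => M1)
        (match tr.val.2 with | some t2 => N2.fire M2 t2 | none => M2) := by
  funext x
  cases x with
  | inl p1 => rw [prod_fire_inl]; cases h : tr.val.1 <;> simp
  | inr p2 => rw [prod_fire_inr]; cases h : tr.val.2 <;> simp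

section Specific

variable (S : AcceptingSystem P T A) (σ : List A)

/-- Abbreviation for the move-reading map. -/
def mv (σ : List A) (S : AcceptingSystem P T A) :
    SyncTrans (traceSystem σ).net S.net → Move A T :=
  fun tr => (tr.val.1.bind (traceSystem σ).net.label, tr.val.2)

lemma filterMap_fst_map (ρ : List (SyncTrans (traceSystem σ).net S.net)) :
    (ρ.map (mv σ S)).filterMap Prod.fst = (ρ.filterMap (·.val.1)).map σ.get := by
  induction ρ with
  | nil => rfl
  | cons a l ih =>
    show List.filterMap Prod.fst (mv σ S a :: List.map (mv σ S) l) = _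
    cases h : a.val.1 <;>
      simp [mv, List.filterMap_cons, h, ih, traceSystem, traceNet] <;> exact ih

lemma filterMap_snd_map (ρ : List (SyncTrans (traceSystem σ).net S.net)) :
    (ρ.map (mv σ S)).filterMap Prod.snd = ρ.filterMap (·.val.2) := by
  induction ρ with
  | nil => rfl
  | cons a l ih =>
    cases h : a.val.2 <;>
      simp [mv, List.filterMap_cons, h, ih]

lemma map_inj_aux :
    ∀ (ρ ρ' : List (SyncTrans (traceSystem σ).net S.net)),
      ρ.map (mv σ S) = ρ'.map (mv σ S) →
      ρ.filterMap (·.val.1) = ρ'.filterMap (·.val.1) →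
      ρ = ρ' := by
  intro ρ
  induction ρ with
  | nil =>
    intro ρ' h _
    cases ρ' with
    | nil => rfl
    | cons a l => simp at h
  | cons a l ih =>
    intro ρ' h hf
    cases ρ' with
    | nil => simp at h
    | cons a' l' =>
      simp only [List.map_cons, List.cons.injEq] at h
      obtain ⟨hhead, htail⟩ := h
      have h2 : a.val.2 = a'.val.2 := by
        have := congrArg Prod.snd hhead; simpa [mv] using this
      have h1 : a.val.1.bind (traceSystem σ).net.label =
          a'.val.1.bind (traceSystem σ).net.label := by
        have := congrArg Prod.fst hhead; simpa [mv] using this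
      cases ha : a.val.1 with
      | none =>
        cases ha' : a'.val.1 with
        | none =>
          have hval : a.val = a'.val := Prod.ext (ha.trans ha'.symm) h2
          rw [Subtype.ext hval]
          rw [List.filterMap_cons, List.filterMap_cons, ha, ha'] at hf
          rw [ih l' htail hf]
        | some t1' =>
          rw [ha, ha'] at h1
          simp [traceSystem, traceNet] at h1
      | some t1 =>
        cases ha' : a'.val.1 with
        | none =>
          rw [ha, ha'] at h1
          simp [traceSystem, traceNet] at h1
        | some t1' =>
          rw [List.filterMap_cons, List.filterMap_cons, ha, ha'] at hf
          simp only [List.cons.injEq] at hf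
          obtain ⟨ht, hf'⟩ := hf
          have hval : a.val = a'.val := Prod.ext (by rw [ha, ha', ht]) h2
          rw [Subtype.ext hval]
          rw [ih l' htail hf']

lemma surj_aux :
    ∀ (γ : List (Move A T)) (i : ℕ), i ≤ σ.length →
      γ.filterMap Prod.fst = σ.drop i →
      (∀ m ∈ γ, LegalMove S.net m) →
      ∀ (M2 M2' : P → ℕ), Fires S.net M2 (γ.filterMap Prod.snd) M2' →
      ∃ ρ : List (SyncTrans (traceSystem σ).net S.net),
        Fires (syncProdNet (traceSystem σ).net S.net)
          (Sum.elim (δ σ i) M2) ρ (Sum.elim (δ σ σ.length) M2') ∧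
        ρ.map (mv σ S) = γ := by
  intro γ
  induction γ with
  | nil =>
    intro i hi hfst _ M2 M2' hfire
    have hlen : σ.length ≤ i := by
      have : (σ.drop i).length = 0 := by rw [← hfst]; rfl
      simp at this; omega
    have hieq : i = σ.length := le_antisymm hi hlen
    have hM := fires_nil_eq hfire
    subst hieq
    rw [← hM]
    exact ⟨[], Fires.nil _, rfl⟩
  | cons m γ ih =>
    intro i hi hfst hleg M2 M2' hfire
    obtain ⟨oa, ot⟩ := m
    have hlegm : LegalMove S.net (oa, ot) := hleg _ List.mem_cons_self
    match oa, ot with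
    | none, none => exact absurd hlegm (by simp [LegalMove])
    | none, some t =>
      -- model move
      rw [List.filterMap_cons] at hfst hfire
      simp only at hfst hfire
      obtain ⟨hen, hf⟩ := fires_cons_inv hfire
      obtain ⟨ρ, hρ, hmap⟩ := ih i hi hfst (fun m hm => hleg m (List.mem_cons_of_mem _ hm))
        (S.net.fire M2 t) M2' hf
      refine ⟨⟨(none, some t), Or.inr (Or.inr ⟨t, rfl⟩)⟩ :: ρ, ?_, ?_⟩
      · refine Fires.cons ?_ ?_
        · exact prod_enabled_elim (fun t1 h => by simp at h)
            (fun t2 h => by cases h; exact hen)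
        · erw [prod_fire_elim]
          exact hρ
      · show mv σ S _ :: List.map (mv σ S) ρ = _
        simp [mv, hmap]
    | some a, ot' =>
      -- the first component is a log event: current position is i
      rw [List.filterMap_cons] at hfst
      have hilt : i < σ.length := by
        by_contra hle
        rw [List.drop_eq_nil_of_le (by omega)] at hfst
        cases ot' <;> simp at hfst
      rw [List.drop_eq_getElem_cons hilt] at hfst
      set tfin : Fin σ.length := ⟨i, hilt⟩ with htfin
      have hget : σ.get tfin = σ[i] := rfl
      match ot' with
      | none =>
        -- log move
        simp only [List.cons.injEq] at hfst
        obtain ⟨hae, hfst'⟩ := hfst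
        rw [List.filterMap_cons] at hfire
        simp only at hfire
        obtain ⟨ρ, hρ, hmap⟩ := ih (i + 1) hilt hfst'
          (fun m hm => hleg m (List.mem_cons_of_mem _ hm)) M2 M2' hfire
        refine ⟨⟨(some tfin, none), Or.inr (Or.inl ⟨tfin, rfl⟩)⟩ :: ρ, ?_, ?_⟩
        · refine Fires.cons ?_ ?_
          · refine prod_enabled_elim (fun t1 h => ?_) (fun t2 h => by simp at h)
            cases h
            exact (trace_enabled_iff σ i tfin).mpr rfl
          · erw [prod_fire_elim]
            show Fires (syncProdNet (traceSystem σ).net S.net)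
              (Sum.elim ((traceNet σ).fire (δ σ i) tfin) M2) ρ
              (Sum.elim (δ σ σ.length) M2')
            rw [trace_fire σ i tfin rfl]
            exact hρ
        · show mv σ S _ :: List.map (mv σ S) ρ = _
          simp [mv, hmap, traceSystem, traceNet, hget, hae]
          exact ⟨rfl, hmap⟩
      | some t =>
        -- synchronous move
        simp only [List.cons.injEq] at hfst
        obtain ⟨hae, hfst'⟩ := hfst
        rw [List.filterMap_cons] at hfire
        simp only at hfire
        obtain ⟨hen, hf⟩ := fires_cons_inv hfire
        obtain ⟨ρ, hρ, hmap⟩ := ih (i + 1) hilt hfst'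
          (fun m hm => hleg m (List.mem_cons_of_mem _ hm)) (S.net.fire M2 t) M2' hf
        have hlab : S.net.label t = some a := hlegm
        have hlabeq : (traceSystem σ).net.label tfin = S.net.label t := by
          rw [hlab]
          simp [traceSystem, traceNet, hget, hae]
          rfl
        refine ⟨⟨(some tfin, some t), Or.inl ⟨tfin, t, rfl, hlabeq⟩⟩ :: ρ, ?_, ?_⟩
        · refine Fires.cons ?_ ?_
          · refine prod_enabled_elim (fun t1 h => ?_) (fun t2 h => ?_)
            · cases h
              exact (trace_enabled_iff σ i tfin).mpr rfl
            · cases h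
              exact hen
          · erw [prod_fire_elim]
            show Fires (syncProdNet (traceSystem σ).net S.net)
              (Sum.elim ((traceNet σ).fire (δ σ i) tfin) (S.net.fire M2 t)) ρ
              (Sum.elim (δ σ σ.length) M2')
            rw [trace_fire σ i tfin rfl]
            exact hρ
        · show mv σ S _ :: List.map (mv σ S) ρ = _
          simp [mv, hmap, traceSystem, traceNet, hget, hae]
          exact ⟨rfl, hmap⟩

end Specific

end AlignAux

/-- The alignments between a trace `σ` and an accepting system `S` are exactly the complete
firing sequences of the synchronous product `T(σ) ⊗ S`: mapping each product transition
`(t1,t2)` to the move `(ℓ1(t1) if t1 ≠ ≫ else ≫, t2)` gives a bijection between the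
complete firing sequences of `T(σ) ⊗ S` and `Γ_{σ,S}`. -/
theorem alignments_are_syncProd_firings {P T A : Type} [Fintype P] [Fintype T]
    (S : AcceptingSystem P T A) (hconn : S.net.WeaklyConnected) (σ : List A) :
    Set.BijOn
      (List.map (fun tr : SyncTrans (traceSystem σ).net S.net =>
        ((tr.val.1.bind (traceSystem σ).net.label, tr.val.2) : Move A T)))
      {ρ : List (SyncTrans (traceSystem σ).net S.net) |
        CompleteFiring (syncProd (traceSystem σ) S) ρ}
      {γ : List (Move A T) | IsAlignment S σ γ} := by
  have hmv : (fun tr : SyncTrans (traceSystem σ).net S.net =>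
      ((tr.val.1.bind (traceSystem σ).net.label, tr.val.2) : Move A T)) = AlignAux.mv σ S := rfl
  rw [hmv]
  refine ⟨?_, ?_, ?_⟩
  · -- MapsTo
    intro ρ hρ
    have hρ' : Fires (syncProdNet (traceSystem σ).net S.net)
        (Sum.elim (AlignAux.δ σ 0) S.init) ρ
        (Sum.elim (AlignAux.δ σ σ.length) S.final) := hρ
    have h1 : Fires (traceNet σ) (AlignAux.δ σ 0) (ρ.filterMap (·.val.1))
        (AlignAux.δ σ σ.length) := AlignAux.prod_fires_inl hρ'
    have h2 : Fires S.net S.init (ρ.filterMap (·.val.2)) S.final :=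
      AlignAux.prod_fires_inr hρ'
    refine ⟨?_, ?_, ?_⟩
    · intro m hm
      rw [List.mem_map] at hm
      obtain ⟨tr, htr, rfl⟩ := hm
      rcases tr.property with ⟨t1, t2, heq, hlab⟩ | ⟨t1, heq⟩ | ⟨t2, heq⟩
      · have hm : AlignAux.mv σ S tr = (some (σ.get t1), some t2) := by
          simp [AlignAux.mv, heq, traceSystem, traceNet]
        rw [hm]
        exact hlab.symm
      · have hm : AlignAux.mv σ S tr = (some (σ.get t1), none) := by
          simp [AlignAux.mv, heq, traceSystem, traceNet]
        rw [hm]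
        trivial
      · have hm : AlignAux.mv σ S tr = (none, some t2) := by
          simp [AlignAux.mv, heq]
        rw [hm]
        trivial
    · rw [AlignAux.filterMap_fst_map,
        AlignAux.trace_fires_get σ _ 0 (Nat.zero_le _) h1]
      exact List.drop_zero
    · show CompleteFiring S ((ρ.map (AlignAux.mv σ S)).filterMap Prod.snd)
      rw [AlignAux.filterMap_snd_map]
      exact h2
  · -- InjOn
    intro ρ hρ ρ' hρ' heq
    have w1 : Fires (syncProdNet (traceSystem σ).net S.net)
        (Sum.elim (AlignAux.δ σ 0) S.init) ρ
        (Sum.elim (AlignAux.δ σ σ.length) S.final) := hρ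
    have w2 : Fires (syncProdNet (traceSystem σ).net S.net)
        (Sum.elim (AlignAux.δ σ 0) S.init) ρ'
        (Sum.elim (AlignAux.δ σ σ.length) S.final) := hρ'
    have h1 : Fires (traceNet σ) (AlignAux.δ σ 0) (ρ.filterMap (·.val.1))
        (AlignAux.δ σ σ.length) := AlignAux.prod_fires_inl w1
    have h1' : Fires (traceNet σ) (AlignAux.δ σ 0) (ρ'.filterMap (·.val.1))
        (AlignAux.δ σ σ.length) := AlignAux.prod_fires_inl w2
    have e1 := AlignAux.trace_fires_val σ _ 0 (Nat.zero_le _) h1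
    have e1' := AlignAux.trace_fires_val σ _ 0 (Nat.zero_le _) h1'
    have hv : (ρ.filterMap (·.val.1)).map Fin.val =
        (ρ'.filterMap (·.val.1)).map Fin.val := e1.trans e1'.symm
    have hf : ρ.filterMap (·.val.1) = ρ'.filterMap (·.val.1) :=
      List.map_injective_iff.mpr Fin.val_injective hv
    exact AlignAux.map_inj_aux S σ ρ ρ' heq hf
  · -- SurjOn
    intro γ hγ
    obtain ⟨hleg, hfst, hfire⟩ := hγ
    obtain ⟨ρ, hρ, hmap⟩ := AlignAux.surj_aux S σ γ 0 (Nat.zero_le _)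
      (by rw [hfst, List.drop_zero]) hleg S.init S.final hfire
    exact ⟨ρ, hρ, hmap⟩
end

section
/- Given two systems S1 and S2 with disjoint place and transition sets, the set of reachable markings of their synchronous product is exactly the set of sums of a reachable marking of S1 and a reachable marking of S2: reach(S1⊗S2) = { M1 + M2 : M1 ∈ reach(S1), M2 ∈ reach(S2) }. -/
open PetriNet

namespace PetriNet

variable {P T A : Type} {N : PetriNet P T A}

theorem Fires.append {M M' M'' : P → ℕ} {σ σ' : List T} (h : Fires N M σ M')
    (h' : Fires N M' σ' M'') : Fires N M (σ ++ σ') M'' := by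
  induction h with
  | nil => exact h'
  | cons he _ ih => exact Fires.cons he (ih h')

theorem mem_reach_self (M : P → ℕ) : M ∈ reach N M :=
  ⟨[], Fires.nil M⟩

theorem reach_trans {M M' M'' : P → ℕ} (h : M' ∈ reach N M) (h' : M'' ∈ reach N M') :
    M'' ∈ reach N M :=
  let ⟨σ, hσ⟩ := h
  let ⟨σ', hσ'⟩ := h'
  ⟨σ ++ σ', hσ.append hσ'⟩

theorem fire_apply_congr {P' T' A' : Type} {N' : PetriNet P' T' A'} {M : P → ℕ} {M' : P' → ℕ}
    {t : T} {t' : T'} {p : P} {p' : P'} (hpre : N.pre p t ↔ N'.pre p' t')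
    (hpost : N.post t p ↔ N'.post t' p') (hM : M p = M' p') :
    N.fire M t p = N'.fire M' t' p' := by
  unfold fire
  split_ifs <;> simp_all

theorem fire_apply_of_not_pre_of_not_post {M : P → ℕ} {t : T} {p : P} (hpre : ¬N.pre p t)
    (hpost : ¬N.post t p) : N.fire M t p = M p := by
  simp [fire, hpre, hpost]

/-- `none` stands for the no-move `≫`, which leaves the marking unchanged. -/
noncomputable def fireOption (N : PetriNet P T A) (M : P → ℕ) : Option T → P → ℕ
  | some t => N.fire M t
  | none => M

theorem fireOption_mem_reach {M : P → ℕ} {o : Option T} (he : ∀ t ∈ o, N.Enabled M t) :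
    N.fireOption M o ∈ reach N M := by
  cases o with
  | none => exact mem_reach_self M
  | some t => exact ⟨[t], Fires.cons (he t rfl) (Fires.nil _)⟩

end PetriNet

section SyncProd

variable {P1 T1 P2 T2 A : Type} {N1 : PetriNet P1 T1 A} {N2 : PetriNet P2 T2 A}

def SyncTrans.inl (N1 : PetriNet P1 T1 A) (N2 : PetriNet P2 T2 A) (t1 : T1) :
    SyncTrans N1 N2 :=
  ⟨(some t1, none), Or.inr (Or.inl ⟨t1, rfl⟩)⟩

def SyncTrans.inr (N1 : PetriNet P1 T1 A) (N2 : PetriNet P2 T2 A) (t2 : T2) :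
    SyncTrans N1 N2 :=
  ⟨(none, some t2), Or.inr (Or.inr ⟨t2, rfl⟩)⟩

theorem syncProdNet_enabled_sumElim_iff {M1 : P1 → ℕ} {M2 : P2 → ℕ} {t : SyncTrans N1 N2} :
    (syncProdNet N1 N2).Enabled (Sum.elim M1 M2) t ↔
      (∀ t1 ∈ t.val.1, N1.Enabled M1 t1) ∧ (∀ t2 ∈ t.val.2, N2.Enabled M2 t2) := by
  constructor
  · intro h
    exact ⟨fun t1 ht p1 hp => h (Sum.inl p1) ⟨t1, ht, hp⟩,
      fun t2 ht p2 hp => h (Sum.inr p2) ⟨t2, ht, hp⟩⟩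
  · rintro ⟨h1, h2⟩ (p1 | p2) ⟨t', ht, hp⟩
    · exact h1 t' ht p1 hp
    · exact h2 t' ht p2 hp

theorem syncProdNet_fire_sumElim (M1 : P1 → ℕ) (M2 : P2 → ℕ) (t : SyncTrans N1 N2) :
    (syncProdNet N1 N2).fire (Sum.elim M1 M2) t =
      Sum.elim (N1.fireOption M1 t.val.1) (N2.fireOption M2 t.val.2) := by
  obtain ⟨⟨o1, o2⟩, -⟩ := t
  funext p
  rcases p with p1 | p2
  · cases o1
    · exact fire_apply_of_not_pre_of_not_post (by simp [syncProdNet]) (by simp [syncProdNet])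
    · exact fire_apply_congr (by simp [syncProdNet]) (by simp [syncProdNet]) rfl
  · cases o2
    · exact fire_apply_of_not_pre_of_not_post (by simp [syncProdNet]) (by simp [syncProdNet])
    · exact fire_apply_congr (by simp [syncProdNet]) (by simp [syncProdNet]) rfl

theorem PetriNet.Fires.map_syncTransInl {M1 M1' : P1 → ℕ} (M2 : P2 → ℕ) {σ : List T1}
    (h : Fires N1 M1 σ M1') :
    Fires (syncProdNet N1 N2) (Sum.elim M1 M2) (σ.map (SyncTrans.inl N1 N2))
      (Sum.elim M1' M2) := by
  induction h with
  | nil => exact Fires.nil _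
  | cons he _ ih =>
    refine Fires.cons (syncProdNet_enabled_sumElim_iff.2 ⟨?_, ?_⟩) ?_
    · rintro t1 ⟨⟩; exact he
    · rintro t2 ⟨⟩
    · rwa [syncProdNet_fire_sumElim]

theorem PetriNet.Fires.map_syncTransInr (M1 : P1 → ℕ) {M2 M2' : P2 → ℕ} {σ : List T2}
    (h : Fires N2 M2 σ M2') :
    Fires (syncProdNet N1 N2) (Sum.elim M1 M2) (σ.map (SyncTrans.inr N1 N2))
      (Sum.elim M1 M2') := by
  induction h with
  | nil => exact Fires.nil _
  | cons he _ ih =>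
    refine Fires.cons (syncProdNet_enabled_sumElim_iff.2 ⟨?_, ?_⟩) ?_
    · rintro t1 ⟨⟩
    · rintro t2 ⟨⟩; exact he
    · rwa [syncProdNet_fire_sumElim]

theorem sumElim_mem_reach_syncProdNet {M1 M1' : P1 → ℕ} {M2 M2' : P2 → ℕ}
    (h1 : M1' ∈ reach N1 M1) (h2 : M2' ∈ reach N2 M2) :
    Sum.elim M1' M2' ∈ reach (syncProdNet N1 N2) (Sum.elim M1 M2) :=
  let ⟨σ1, hσ1⟩ := h1
  let ⟨σ2, hσ2⟩ := h2
  ⟨σ1.map (SyncTrans.inl N1 N2) ++ σ2.map (SyncTrans.inr N1 N2),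
    (hσ1.map_syncTransInl M2).append (hσ2.map_syncTransInr M1')⟩

theorem exists_sumElim_of_fires_syncProdNet {M1 : P1 → ℕ} {M2 : P2 → ℕ} {M : P1 ⊕ P2 → ℕ}
    {σ : List (SyncTrans N1 N2)} (h : Fires (syncProdNet N1 N2) (Sum.elim M1 M2) σ M) :
    ∃ M1' ∈ reach N1 M1, ∃ M2' ∈ reach N2 M2, M = Sum.elim M1' M2' := by
  induction σ generalizing M1 M2 with
  | nil => cases h; exact ⟨M1, mem_reach_self M1, M2, mem_reach_self M2, rfl⟩
  | cons t σ ih =>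
    obtain _ | ⟨he, hf⟩ := h
    rw [syncProdNet_fire_sumElim] at hf
    obtain ⟨he1, he2⟩ := syncProdNet_enabled_sumElim_iff.1 he
    obtain ⟨M1', h1, M2', h2, rfl⟩ := ih hf
    exact ⟨M1', reach_trans (fireOption_mem_reach he1) h1,
      M2', reach_trans (fireOption_mem_reach he2) h2, rfl⟩

theorem reach_syncProdNet_sumElim (M1 : P1 → ℕ) (M2 : P2 → ℕ) :
    reach (syncProdNet N1 N2) (Sum.elim M1 M2) =
      {M | ∃ M1' ∈ reach N1 M1, ∃ M2' ∈ reach N2 M2, M = Sum.elim M1' M2'} := by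
  ext M
  constructor
  · rintro ⟨σ, hσ⟩
    exact exists_sumElim_of_fires_syncProdNet hσ
  · rintro ⟨M1', h1, M2', h2, rfl⟩
    exact sumElim_mem_reach_syncProdNet h1 h2

end SyncProd

theorem reach_syncProd_general {P1 T1 P2 T2 A : Type}
    (S1 : AcceptingSystem P1 T1 A) (S2 : AcceptingSystem P2 T2 A) :
    reach (syncProd S1 S2).net (syncProd S1 S2).init =
      {M : P1 ⊕ P2 → ℕ | ∃ M1 ∈ reach S1.net S1.init, ∃ M2 ∈ reach S2.net S2.init,
        M = Sum.elim M1 M2} :=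
  reach_syncProdNet_sumElim S1.init S2.init

/-- The set of reachable markings of a synchronous product is exactly the set of sums of a
reachable marking of `S1` and a reachable marking of `S2` (a marking on `P1 ∪ P2` is
identified with the pair of its restrictions, i.e. with `Sum.elim M1 M2`). -/
theorem reach_syncProd {P1 T1 P2 T2 A : Type}
    [Fintype P1] [Fintype T1] [Fintype P2] [Fintype T2]
    (S1 : AcceptingSystem P1 T1 A) (S2 : AcceptingSystem P2 T2 A)
    (hconn1 : S1.net.WeaklyConnected) (hconn2 : S2.net.WeaklyConnected) :
    reach (syncProd S1 S2).net (syncProd S1 S2).init =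
      {M : P1 ⊕ P2 → ℕ | ∃ M1 ∈ reach S1.net S1.init, ∃ M2 ∈ reach S2.net S2.init,
        M = Sum.elim M1 M2} :=
  reach_syncProd_general S1 S2
end

section
/- Given a b1-bounded system S1 and a b2-bounded system S2 with disjoint place and transition sets, their synchronous product S1⊗S2 is max{b1,b2}-bounded. -/
open PetriNet

/-!
A firing sequence of the synchronous product projects, by forgetting the moves of the
other component, onto a firing sequence of each factor, and the marking of the product
restricted to the places of a factor is exactly the marking reached there. So every
reachable marking of the product is bounded by `b1` on the places of the first factor and
by `b2` on those of the second.
-/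

namespace PetriNet

section Projection

variable {P T Q U A B : Type} {N : PetriNet P T A} {N' : PetriNet Q U B}
  {f : Q → P} {g : T → Option U}

/-- `N'` is read off `N` along the places `f` and the partial transition map `g`; in
particular transitions erased by `g` have no arc to or from a place in the range of `f`. -/
def IsProjection (N : PetriNet P T A) (N' : PetriNet Q U B) (f : Q → P) (g : T → Option U) :
    Prop :=
  ∀ t q, (N.pre (f q) t ↔ ∃ u, g t = some u ∧ N'.pre q u) ∧
    (N.post t (f q) ↔ ∃ u, g t = some u ∧ N'.post u q)

lemma IsProjection.enabled_comp (hπ : IsProjection N N' f g) {M : P → ℕ} {t : T} {u : U}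
    (hu : g t = some u) (hen : N.Enabled M t) : N'.Enabled (M ∘ f) u :=
  fun q hq => hen (f q) ((hπ t q).1.2 ⟨u, hu, hq⟩)

lemma IsProjection.fire_comp_of_some (hπ : IsProjection N N' f g) (M : P → ℕ) {t : T} {u : U}
    (hu : g t = some u) : N.fire M t ∘ f = N'.fire (M ∘ f) u := by
  funext q
  have hpre : N.pre (f q) t ↔ N'.pre q u := by simp [(hπ t q).1, hu]
  have hpost : N.post t (f q) ↔ N'.post u q := by simp [(hπ t q).2, hu]
  simp only [Function.comp_apply, fire]
  split_ifs <;> tauto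

lemma IsProjection.fire_comp_of_none (hπ : IsProjection N N' f g) (M : P → ℕ) {t : T}
    (ht : g t = none) : N.fire M t ∘ f = M ∘ f := by
  funext q
  have hpre : ¬N.pre (f q) t := by simp [(hπ t q).1, ht]
  have hpost : ¬N.post t (f q) := by simp [(hπ t q).2, ht]
  simp [fire, hpre, hpost]

lemma IsProjection.fires_comp (hπ : IsProjection N N' f g) {M M' : P → ℕ} {σ : List T}
    (h : Fires N M σ M') : Fires N' (M ∘ f) (σ.filterMap g) (M' ∘ f) := by
  induction h with
  | nil M => exact Fires.nil _
  | @cons M M' t _ hen _ ih =>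
    rw [List.filterMap_cons]
    cases ht : g t with
    | none => rwa [← hπ.fire_comp_of_none M ht]
    | some u =>
      refine Fires.cons (hπ.enabled_comp ht hen) ?_
      rwa [← hπ.fire_comp_of_some M ht]

lemma IsProjection.comp_mem_reach (hπ : IsProjection N N' f g) {M0 M : P → ℕ}
    (hM : M ∈ reach N M0) : M ∘ f ∈ reach N' (M0 ∘ f) :=
  let ⟨_, hσ⟩ := hM
  ⟨_, hπ.fires_comp hσ⟩

lemma IsProjection.le_of_bounded (hπ : IsProjection N N' f g) {M0 M : P → ℕ}
    (hM : M ∈ reach N M0) {b : ℕ} (hb : Bounded N' (M0 ∘ f) b) (q : Q) : M (f q) ≤ b :=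
  hb _ (hπ.comp_mem_reach hM) q

end Projection

end PetriNet

open PetriNet

section SyncProd

variable {P1 T1 P2 T2 A : Type} (N1 : PetriNet P1 T1 A) (N2 : PetriNet P2 T2 A)

lemma isProjection_syncProdNet_inl :
    IsProjection (syncProdNet N1 N2) N1 Sum.inl (fun t => t.val.1) :=
  fun _ _ => ⟨Iff.rfl, Iff.rfl⟩

lemma isProjection_syncProdNet_inr :
    IsProjection (syncProdNet N1 N2) N2 Sum.inr (fun t => t.val.2) :=
  fun _ _ => ⟨Iff.rfl, Iff.rfl⟩

end SyncProd

theorem syncProd_bounded_general {P1 T1 P2 T2 A : Type}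
    (S1 : AcceptingSystem P1 T1 A) (S2 : AcceptingSystem P2 T2 A)
    (b1 b2 : ℕ) (hb1 : Bounded S1.net S1.init b1) (hb2 : Bounded S2.net S2.init b2) :
    Bounded (syncProd S1 S2).net (syncProd S1 S2).init (max b1 b2) := by
  rintro M hM (p | p)
  · exact ((isProjection_syncProdNet_inl S1.net S2.net).le_of_bounded hM hb1 p).trans
      (le_max_left b1 b2)
  · exact ((isProjection_syncProdNet_inr S1.net S2.net).le_of_bounded hM hb2 p).trans
      (le_max_right b1 b2)

/-- The synchronous product of a `b1`-bounded system and a `b2`-bounded system is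
`max{b1,b2}`-bounded. -/
theorem syncProd_bounded {P1 T1 P2 T2 A : Type}
    [Fintype P1] [Fintype T1] [Fintype P2] [Fintype T2]
    (S1 : AcceptingSystem P1 T1 A) (S2 : AcceptingSystem P2 T2 A)
    (hconn1 : S1.net.WeaklyConnected) (hconn2 : S2.net.WeaklyConnected)
    (b1 b2 : ℕ) (hb1 : Bounded S1.net S1.init b1) (hb2 : Bounded S2.net S2.init b2) :
    Bounded (syncProd S1 S2).net (syncProd S1 S2).init (max b1 b2) :=
  syncProd_bounded_general S1 S2 b1 b2 hb1 hb2
end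

section
/- A workflow net N=(P,T,F,ℓ,i,o) is sound if and only if the short-circuited net (obtained by adding a fresh transition t̄ with input place o and output place i), started from the marking [i], is live and bounded. -/
open PetriNet

/-- The short-circuited net: a fresh transition `t̄` (the `Sum.inr` transition) with input
place `o` and output place `i` is added. -/
def shortCircuit {P T A : Type} (N : PetriNet P T A) (i o : P) : PetriNet P (T ⊕ Unit) A where
  pre p t :=
    match t with
    | Sum.inl t => N.pre p t
    | Sum.inr _ => p = o
  post t p :=
    match t with
    | Sum.inl t => N.post t p
    | Sum.inr _ => p = i
  label t :=
    match t with
    | Sum.inl t => N.label t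
    | Sum.inr _ => none

/-- One directed step in the underlying graph of a net. -/
def DStep {P T A : Type} (N : PetriNet P T A) : P ⊕ T → P ⊕ T → Prop
  | Sum.inl p, Sum.inr t => N.pre p t
  | Sum.inr t, Sum.inl p => N.post t p
  | _, _ => False

/-- The underlying graph of the net is strongly connected. -/
def StronglyConnected {P T A : Type} (N : PetriNet P T A) : Prop :=
  ∀ x y : P ⊕ T, Relation.ReflTransGen (DStep N) x y

/-- The marking with a single token on `p0`. -/
def unitM {P : Type} [DecidableEq P] (p0 : P) : P → ℕ :=
  fun p => if p = p0 then 1 else 0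

/-- A workflow net: a Petri net with a source place `i` and a sink place `o` without output
transitions such that the short-circuited net is strongly connected. -/
structure WorkflowNet (P T A : Type) where
  net : PetriNet P T A
  i : P
  o : P
  sink : ∀ t : T, ¬ net.pre o t
  connected : StronglyConnected (shortCircuit net i o)

/-- Soundness of a workflow net: option to complete, proper completion,
and no dead transitions. -/
def WSound {P T A : Type} [DecidableEq P] (W : WorkflowNet P T A) : Prop :=
  (∀ M ∈ reach W.net (unitM W.i), unitM W.o ∈ reach W.net M) ∧
  (∀ M ∈ reach W.net (unitM W.i), (∀ p, unitM W.o p ≤ M p) → M = unitM W.o) ∧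
  (∀ t : T, ∃ M ∈ reach W.net (unitM W.i), W.net.Enabled M t)
section Aux

open PetriNet

variable {P T A : Type}

theorem aux_fires_append {N : PetriNet P T A} {M M1 M2 : P → ℕ} {σ1 σ2 : List T}
    (h1 : Fires N M σ1 M1) (h2 : Fires N M1 σ2 M2) : Fires N M (σ1 ++ σ2) M2 := by
  induction h1 with
  | nil => simpa using h2
  | cons he _ ih => exact Fires.cons he (ih h2)

theorem aux_fires_split {N : PetriNet P T A} {M M2 : P → ℕ} {σ1 σ2 : List T}
    (h : Fires N M (σ1 ++ σ2) M2) : ∃ M1, Fires N M σ1 M1 ∧ Fires N M1 σ2 M2 := by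
  induction σ1 generalizing M with
  | nil => exact ⟨M, Fires.nil M, by simpa using h⟩
  | cons t σ ih =>
    cases h with
    | cons he h' =>
      obtain ⟨M1, ha, hb⟩ := ih h'
      exact ⟨M1, Fires.cons he ha, hb⟩

/-- The marking after firing `σ` from `M` (as a fold; agrees with `Fires`). -/
noncomputable def aux_after (N : PetriNet P T A) (M : P → ℕ) (σ : List T) : P → ℕ :=
  σ.foldl N.fire M

theorem aux_fires_after {N : PetriNet P T A} {M M' : P → ℕ} {σ : List T}
    (h : Fires N M σ M') : M' = aux_after N M σ := by
  induction h with
  | nil => rfl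
  | cons _ _ ih => simpa [aux_after] using ih

theorem aux_reach_trans {N : PetriNet P T A} {M0 M1 M2 : P → ℕ}
    (h1 : M1 ∈ reach N M0) (h2 : M2 ∈ reach N M1) : M2 ∈ reach N M0 := by
  obtain ⟨σ1, h1⟩ := h1; obtain ⟨σ2, h2⟩ := h2
  exact ⟨σ1 ++ σ2, aux_fires_append h1 h2⟩

theorem aux_reach_self {N : PetriNet P T A} (M : P → ℕ) : M ∈ reach N M :=
  ⟨[], Fires.nil M⟩

theorem aux_reach_step {N : PetriNet P T A} {M0 M : P → ℕ} {t : T}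
    (h : M ∈ reach N M0) (he : N.Enabled M t) : N.fire M t ∈ reach N M0 := by
  obtain ⟨σ, h⟩ := h
  exact ⟨σ ++ [t], aux_fires_append h (Fires.cons he (Fires.nil _))⟩

theorem aux_fire_add {N : PetriNet P T A} {M : P → ℕ} {t : T} (d : P → ℕ)
    (he : N.Enabled M t) :
    N.fire (fun p => M p + d p) t = fun p => N.fire M t p + d p := by
  funext p
  simp only [PetriNet.fire]
  split_ifs with h1 h2
  · have := he p h1.1; omega
  · omega
  · rfl

theorem aux_enabled_add {N : PetriNet P T A} {M : P → ℕ} {t : T} (d : P → ℕ)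
    (he : N.Enabled M t) : N.Enabled (fun p => M p + d p) t := by
  intro p hp
  have := he p hp
  show 0 < M p + d p
  omega

theorem aux_fires_add {N : PetriNet P T A} {M M' : P → ℕ} {σ : List T} (d : P → ℕ)
    (h : Fires N M σ M') :
    Fires N (fun p => M p + d p) σ (fun p => M' p + d p) := by
  induction h with
  | nil => exact Fires.nil _
  | cons he h ih =>
    exact Fires.cons (aux_enabled_add d he) (by rwa [aux_fire_add d he])

end Aux
section Selfcover

open PetriNet

variable {P T A : Type}

/-- A firing sequence is *simple* if the markings along it are pairwise distinct. -/
def aux_Simple (N : PetriNet P T A) (M0 : P → ℕ) (σ : List T) : Prop :=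
  ∀ a b : ℕ, a < b → b ≤ σ.length →
    aux_after N M0 (σ.take a) ≠ aux_after N M0 (σ.take b)

theorem aux_exists_simple {N : PetriNet P T A} {M0 M : P → ℕ} :
    ∀ n (σ : List T), σ.length ≤ n → Fires N M0 σ M →
      ∃ σ', Fires N M0 σ' M ∧ aux_Simple N M0 σ' := by
  intro n
  induction n with
  | zero =>
    intro σ hlen h
    refine ⟨σ, h, ?_⟩
    intro a b hab hb
    omega
  | succ n ih =>
    intro σ hlen h
    by_cases hs : aux_Simple N M0 σ
    · exact ⟨σ, h, hs⟩
    · simp only [aux_Simple, not_forall] at hs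
      obtain ⟨a, b, hab, hb, heq⟩ := hs
      rw [not_ne_iff] at heq
      -- cut out the loop between positions a and b
      have hsplit : σ = σ.take b ++ σ.drop b := (List.take_append_drop b σ).symm
      rw [hsplit] at h
      obtain ⟨Mb, hMb, hdrop⟩ := aux_fires_split h
      have hMb' : Mb = aux_after N M0 (σ.take b) := aux_fires_after hMb
      have htake : (σ.take b).take a = σ.take a := by
        rw [List.take_take, min_eq_left (le_of_lt hab)]
      have hsplit2 : σ.take b = (σ.take b).take a ++ (σ.take b).drop a :=
        (List.take_append_drop a (σ.take b)).symm
      rw [hsplit2] at hMb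
      obtain ⟨Ma, hMa, _⟩ := aux_fires_split hMb
      rw [htake] at hMa
      have hMa' : Ma = aux_after N M0 (σ.take a) := aux_fires_after hMa
      have hMaMb : Ma = Mb := by rw [hMa', hMb', heq]
      have hfire : Fires N M0 (σ.take a ++ σ.drop b) M :=
        aux_fires_append hMa (hMaMb ▸ hdrop)
      have hlen' : (σ.take a ++ σ.drop b).length ≤ n := by
        have h1 : σ.length ≤ n + 1 := hlen
        simp only [List.length_append, List.length_take, List.length_drop]
        omega
      exact ih _ hlen' hfire

theorem aux_simple_prefix {N : PetriNet P T A} {M0 : P → ℕ} {σ ρ : List T}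
    (hs : aux_Simple N M0 σ) (hρ : ρ <+: σ) : aux_Simple N M0 ρ := by
  intro a b hab hb
  obtain ⟨rest, hrest⟩ := hρ
  have h1 : ρ.take a = σ.take a := by
    rw [← hrest, List.take_append]
    have : a - ρ.length = 0 := by omega
    simp [this, List.take_take, min_eq_left (by omega : a ≤ ρ.length)]
  have h2 : ρ.take b = σ.take b := by
    rw [← hrest, List.take_append]
    have : b - ρ.length = 0 := by omega
    simp [this, List.take_take, min_eq_left hb]
  rw [h1, h2]
  exact hs a b hab (by rw [← hrest]; simp; omega)

/-- The set of simple firing sequences from `M0`. -/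
def aux_SS (N : PetriNet P T A) (M0 : P → ℕ) : Set (List T) :=
  {σ | aux_Simple N M0 σ ∧ ∃ M, Fires N M0 σ M}

theorem aux_SS_prefix {N : PetriNet P T A} {M0 : P → ℕ} {σ ρ : List T}
    (h : σ ∈ aux_SS N M0) (hρ : ρ <+: σ) : ρ ∈ aux_SS N M0 := by
  obtain ⟨hs, M, hf⟩ := h
  refine ⟨aux_simple_prefix hs hρ, ?_⟩
  obtain ⟨rest, hrest⟩ := hρ
  rw [← hrest] at hf
  obtain ⟨M1, h1, _⟩ := aux_fires_split hf
  exact ⟨M1, h1⟩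

theorem aux_SS_infinite {N : PetriNet P T A} {M0 : P → ℕ}
    (h : (reach N M0).Infinite) : (aux_SS N M0).Infinite := by
  have hsub : reach N M0 ⊆ (fun σ => aux_after N M0 σ) '' (aux_SS N M0) := by
    rintro M ⟨σ, hσ⟩
    obtain ⟨σ', hf, hs⟩ := aux_exists_simple σ.length σ le_rfl hσ
    exact ⟨σ', ⟨hs, M, hf⟩, (aux_fires_after hf).symm⟩
  have := h.mono hsub
  exact Set.Infinite.of_image _ this

theorem aux_konig_step [Fintype T] {N : PetriNet P T A} {M0 : P → ℕ} {ρ : List T}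
    (h : {σ ∈ aux_SS N M0 | ρ <+: σ}.Infinite) :
    ∃ t : T, {σ ∈ aux_SS N M0 | ρ ++ [t] <+: σ}.Infinite := by
  by_contra hc
  push_neg at hc
  have hsub : {σ ∈ aux_SS N M0 | ρ <+: σ} ⊆
      insert ρ (⋃ t : T, {σ ∈ aux_SS N M0 | ρ ++ [t] <+: σ}) := by
    rintro σ ⟨hσ, rest, hrest⟩
    rcases rest with _ | ⟨t, rest'⟩
    · left; simpa using hrest.symm
    · right
      exact Set.mem_iUnion.2 ⟨t, hσ, rest', by simpa using hrest⟩
  have hfin : (insert ρ (⋃ t : T, {σ ∈ aux_SS N M0 | ρ ++ [t] <+: σ})).Finite :=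
    (Set.finite_iUnion hc).insert ρ
  exact h (hfin.subset hsub)

/-- If infinitely many markings are reachable, there is a reachable marking that
strictly covers an earlier reachable marking on the same path. -/
theorem aux_selfcover [Fintype P] [Fintype T] {N : PetriNet P T A} {M0 : P → ℕ}
    (h : (reach N M0).Infinite) :
    ∃ M M' : P → ℕ, M ∈ reach N M0 ∧ M' ∈ reach N M ∧ (∀ p, M p ≤ M' p) ∧ M ≠ M' := by
  classical
  -- König's lemma: build an infinite simple path
  let St := {ρ : List T // {σ ∈ aux_SS N M0 | ρ <+: σ}.Infinite}
  have hroot : {σ ∈ aux_SS N M0 | ([] : List T) <+: σ}.Infinite := by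
    have : {σ ∈ aux_SS N M0 | ([] : List T) <+: σ} = aux_SS N M0 := by
      ext σ; simp [List.nil_prefix]
    rw [this]; exact aux_SS_infinite h
  let F : St → St := fun x =>
    ⟨x.1 ++ [Classical.choose (aux_konig_step x.2)],
      Classical.choose_spec (aux_konig_step x.2)⟩
  let f : ℕ → List T := fun n => (F^[n] ⟨[], hroot⟩).1
  have hstep : ∀ n, ∃ t, f (n + 1) = f n ++ [t] := by
    intro n
    refine ⟨Classical.choose (aux_konig_step (F^[n] ⟨[], hroot⟩).2), ?_⟩
    show (F^[n+1] ⟨[], hroot⟩).1 = _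
    rw [Function.iterate_succ_apply']
  have hlen : ∀ n, (f n).length = n := by
    intro n
    induction n with
    | zero => rfl
    | succ n ih => obtain ⟨t, ht⟩ := hstep n; simp [ht, ih]
  have hpre : ∀ a b, a ≤ b → f a <+: f b := by
    intro a b hab
    induction b with
    | zero => have : a = 0 := by omega
              subst this; exact List.prefix_refl _
    | succ b ih =>
      rcases Nat.lt_or_ge a (b+1) with hlt | hge
      · obtain ⟨t, ht⟩ := hstep b
        exact (ih (by omega)).trans (ht ▸ (List.prefix_append _ _))
      · have : a = b + 1 := by omega
        subst this; exact List.prefix_refl _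
  have hmem : ∀ n, f n ∈ aux_SS N M0 := by
    intro n
    have hinf := (F^[n] ⟨[], hroot⟩).2
    obtain ⟨σ, hσ⟩ := hinf.nonempty
    exact aux_SS_prefix hσ.1 hσ.2
  -- the markings along the path
  let Mk : ℕ → P → ℕ := fun n => aux_after N M0 (f n)
  have hfires : ∀ n, Fires N M0 (f n) (Mk n) := by
    intro n
    obtain ⟨_, M, hf⟩ := hmem n
    rwa [aux_fires_after hf] at hf
  have hne : ∀ a b, a < b → Mk a ≠ Mk b := by
    intro a b hab
    obtain ⟨hsimp, _⟩ := hmem b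
    have h1 : (f b).take a = f a := by
      have := hpre a b (le_of_lt hab)
      obtain ⟨rest, hrest⟩ := this
      rw [← hrest, List.take_append]
      simp [hlen a, List.take_length]
    have h2 : (f b).take b = f b := by
      rw [List.take_of_length_le (le_of_eq (hlen b))]
    have := hsimp a b hab (le_of_eq (hlen b).symm)
    rwa [h1, h2] at this
  have hreach : ∀ a b, a ≤ b → Mk b ∈ reach N (Mk a) := by
    intro a b hab
    obtain ⟨rest, hrest⟩ := hpre a b hab
    have := hfires b
    rw [← hrest] at this
    obtain ⟨M1, h1, h2⟩ := aux_fires_split this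
    have : M1 = Mk a := by
      rw [aux_fires_after h1]
    exact ⟨rest, this ▸ h2⟩
  -- Dickson's lemma
  have hwo : ∀ _ : P, IsWellOrder ℕ (· < ·) := fun _ => inferInstance
  have hpwo : Set.IsPWO (Set.univ : Set (P → ℕ)) :=
    Set.isPWO_of_wellQuasiOrderedLE _
  obtain ⟨m, n, hmn, hle⟩ := hpwo.exists_lt (f := Mk) (fun n => Set.mem_univ _)
  refine ⟨Mk m, Mk n, ⟨f m, hfires m⟩, hreach m n (le_of_lt hmn), ?_, hne m n hmn⟩
  intro p
  exact hle p

end Selfcover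
section SC

open PetriNet

variable {P T A : Type} [DecidableEq P]

theorem aux_sc_enabled_inl {N : PetriNet P T A} {i o : P} {M : P → ℕ} {t : T} :
    (shortCircuit N i o).Enabled M (Sum.inl t) ↔ N.Enabled M t := Iff.rfl

theorem aux_sc_fire_inl {N : PetriNet P T A} {i o : P} {M : P → ℕ} {t : T} :
    (shortCircuit N i o).fire M (Sum.inl t) = N.fire M t := by
  funext p
  simp only [PetriNet.fire, shortCircuit]
  rfl

theorem aux_sc_fires_inl {N : PetriNet P T A} {i o : P} {M M' : P → ℕ} {σ : List T}
    (h : Fires N M σ M') :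
    Fires (shortCircuit N i o) M (σ.map Sum.inl) M' := by
  induction h with
  | nil => exact Fires.nil _
  | cons he h ih =>
    exact Fires.cons (aux_sc_enabled_inl.2 he) (by rwa [aux_sc_fire_inl])

theorem aux_sc_reach_mono {N : PetriNet P T A} {i o : P} {M M' : P → ℕ}
    (h : M' ∈ reach N M) : M' ∈ reach (shortCircuit N i o) M := by
  obtain ⟨σ, hσ⟩ := h
  exact ⟨σ.map Sum.inl, aux_sc_fires_inl hσ⟩

theorem aux_sc_enabled_inr {N : PetriNet P T A} {i o : P} {M : P → ℕ} {u : Unit} :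
    (shortCircuit N i o).Enabled M (Sum.inr u) ↔ 0 < M o := by
  constructor
  · intro h; exact h o rfl
  · intro h p hp
    simp only [shortCircuit] at hp
    subst hp; exact h

theorem aux_sc_fire_inr_final {N : PetriNet P T A} {i o : P} {u : Unit} :
    (shortCircuit N i o).fire (unitM o) (Sum.inr u) = unitM i := by
  funext p
  simp only [PetriNet.fire, shortCircuit, unitM]
  by_cases hio : i = o
  · subst hio
    by_cases hp : p = i <;> simp [hp]
  · by_cases hpo : p = o
    · subst hpo
      simp [hio, Ne.symm hio]
    · by_cases hpi : p = i
      · subst hpi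
        simp [hpo, hio]
      · simp [hpo, hpi]

/-- Firing the short-circuit transition from a marking covering `[o]` other than `[o]`
yields a marking strictly covering `[i]`. -/
theorem aux_sc_fire_inr_cover {N : PetriNet P T A} {i o : P} {u : Unit} {M : P → ℕ}
    (ho : 0 < M o) (hne : M ≠ unitM o) :
    (∀ p, unitM i p ≤ (shortCircuit N i o).fire M (Sum.inr u) p) ∧
      (shortCircuit N i o).fire M (Sum.inr u) ≠ unitM i := by
  by_cases hio : i = o
  · subst hio
    have hM : (shortCircuit N i i).fire M (Sum.inr u) = M := by
      funext p
      simp only [PetriNet.fire, shortCircuit]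
      by_cases hp : p = i <;> simp [hp]
    rw [hM]
    constructor
    · intro p
      simp only [unitM]
      by_cases hp : p = i <;> simp [hp]
      subst hp; exact ho
    · exact hne
  · have hfo : (shortCircuit N i o).fire M (Sum.inr u) o = M o - 1 := by
      simp only [PetriNet.fire, shortCircuit]
      simp [Ne.symm hio]
    have hfi : (shortCircuit N i o).fire M (Sum.inr u) i = M i + 1 := by
      simp only [PetriNet.fire, shortCircuit]
      simp [hio]
    have hfp : ∀ p, p ≠ o → p ≠ i → (shortCircuit N i o).fire M (Sum.inr u) p = M p := by
      intro p hpo hpi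
      simp only [PetriNet.fire, shortCircuit]
      simp [hpo, hpi]
    constructor
    · intro p
      simp only [unitM]
      by_cases hp : p = i
      · subst hp; simp [hfi]
      · simp [hp]
    · intro hcontra
      apply hne
      funext p
      have h1 := congrFun hcontra p
      by_cases hpo : p = o
      · rw [hpo] at h1 ⊢
        rw [hfo] at h1
        simp [unitM, Ne.symm hio] at h1 ⊢
        omega
      · by_cases hpi : p = i
        · rw [hpi] at h1 ⊢
          rw [hfi] at h1
          simp [unitM, hio] at h1 ⊢
          omega
        · rw [hfp p hpo hpi] at h1
          simp only [unitM, if_neg hpi] at h1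
          simp only [unitM, if_neg hpo]
          omega

end SC
section Main

open PetriNet

variable {P T A : Type} [DecidableEq P]

theorem aux_pump {N : PetriNet P T A} {M0 : P → ℕ} {σ : List T} {d : P → ℕ}
    (h : Fires N M0 σ (fun p => M0 p + d p)) :
    ∀ k : ℕ, (fun p => M0 p + k * d p) ∈ reach N M0 := by
  intro k
  induction k with
  | zero =>
    have : (fun p => M0 p + 0 * d p) = M0 := by funext p; ring
    rw [this]; exact aux_reach_self M0
  | succ k ih =>
    have h2 := aux_fires_add (fun p => k * d p) h
    have heq : (fun p => (fun q => M0 q + d q) p + k * d p) = (fun p => M0 p + (k+1) * d p) := by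
      funext p; ring
    rw [heq] at h2
    exact aux_reach_trans ih ⟨σ, h2⟩

/-- Proper completion follows from boundedness of the short-circuited net. -/
theorem aux_PC {N : PetriNet P T A} {i o : P} {b : ℕ}
    (hB : Bounded (shortCircuit N i o) (unitM i) b) :
    ∀ M ∈ reach N (unitM i), (∀ p, unitM o p ≤ M p) → M = unitM o := by
  intro M hM hle
  by_contra hne
  have ho : 0 < M o := by
    have := hle o; simp [unitM] at this; omega
  have hMr : M ∈ reach (shortCircuit N i o) (unitM i) := aux_sc_reach_mono hM
  have hen : (shortCircuit N i o).Enabled M (Sum.inr ()) := aux_sc_enabled_inr.2 ho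
  have hM1 : (shortCircuit N i o).fire M (Sum.inr ()) ∈ reach (shortCircuit N i o) (unitM i) :=
    aux_reach_step hMr hen
  obtain ⟨hge, hne1⟩ := aux_sc_fire_inr_cover (N := N) (i := i) (o := o) (u := ()) ho hne
  set M1 := (shortCircuit N i o).fire M (Sum.inr ()) with hM1def
  set d : P → ℕ := fun p => M1 p - unitM i p with hd
  have hM1eq : M1 = fun p => unitM i p + d p := by
    funext p; have := hge p; simp only [hd]; omega
  have hdne : ∃ p, 0 < d p := by
    by_contra hcon; push_neg at hcon
    apply hne1; funext p
    have h1 := hge p; have h2 := hcon p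
    simp only [hd] at h2; omega
  obtain ⟨σ, hσ⟩ := hM1
  rw [hM1eq] at hσ
  obtain ⟨p, hp⟩ := hdne
  obtain ⟨σ', hσ'⟩ := aux_pump hσ (b+1)
  have hb := hB _ ⟨σ', hσ'⟩ p
  have : b + 1 ≤ (b+1) * d p := Nat.le_mul_of_pos_right _ hp
  omega

/-- Given proper completion, every marking reachable in the short-circuited net is
reachable in the original net. -/
theorem aux_reach_sub {N : PetriNet P T A} {i o : P}
    (PC : ∀ M ∈ reach N (unitM i), (∀ p, unitM o p ≤ M p) → M = unitM o)
    {σ : List (T ⊕ Unit)} {M0 M : P → ℕ}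
    (h : Fires (shortCircuit N i o) M0 σ M) :
    M0 ∈ reach N (unitM i) → M ∈ reach N (unitM i) := by
  induction h with
  | nil => exact id
  | @cons Mc Mc' tc σc he h ih =>
    intro hM0
    apply ih
    cases tc with
    | inl t' =>
      rw [aux_sc_fire_inl]
      exact aux_reach_step hM0 (aux_sc_enabled_inl.1 he)
    | inr u =>
      have ho : 0 < Mc o := aux_sc_enabled_inr.1 he
      have hMc : Mc = unitM o := by
        refine PC Mc hM0 (fun p => ?_)
        simp only [unitM]
        split_ifs with h
        · subst h; exact ho
        · exact Nat.zero_le _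
      rw [hMc, aux_sc_fire_inr_final]
      exact aux_reach_self _

/-- If a firing sequence of the short-circuited net puts a token on `o`, then already a
firing sequence of the original net puts a token on `o`. -/
theorem aux_oToken {N : PetriNet P T A} {i o : P} {σ : List (T ⊕ Unit)} {M M' : P → ℕ}
    (h : Fires (shortCircuit N i o) M σ M') :
    0 < M' o → ∃ M'' ∈ reach N M, 0 < M'' o := by
  induction h with
  | nil => intro ho; exact ⟨_, aux_reach_self _, ho⟩
  | @cons Mc Mc' tc σc he h ih =>
    intro ho
    cases tc with
    | inl t' =>
      obtain ⟨M'', hr, ho''⟩ := ih ho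
      rw [aux_sc_fire_inl] at hr
      exact ⟨M'', aux_reach_trans
        (aux_reach_step (aux_reach_self Mc) (aux_sc_enabled_inl.1 he)) hr, ho''⟩
    | inr u =>
      exact ⟨Mc, aux_reach_self _, aux_sc_enabled_inr.1 he⟩

end Main
/-- A workflow net is sound iff the short-circuited net, started from the marking `[i]`,
is live and bounded. -/
theorem wf_sound_iff_live_bounded {P T A : Type} [Fintype P] [Fintype T] [DecidableEq P]
    (W : WorkflowNet P T A) :
    WSound W ↔
      (Live (shortCircuit W.net W.i W.o) (unitM W.i) ∧
       ∃ b : ℕ, Bounded (shortCircuit W.net W.i W.o) (unitM W.i) b) := by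
  classical
  constructor
  · rintro ⟨OTC, PC, ND⟩
    have hsub : ∀ M ∈ reach (shortCircuit W.net W.i W.o) (unitM W.i),
        M ∈ reach W.net (unitM W.i) := by
      rintro M ⟨σ, hσ⟩
      exact aux_reach_sub PC hσ (aux_reach_self _)
    constructor
    · -- Live
      rintro M hM t
      have hMN : M ∈ reach W.net (unitM W.i) := hsub M hM
      have hoo : (0:ℕ) < unitM W.o W.o := by simp [unitM]
      cases t with
      | inr u =>
        exact ⟨unitM W.o, aux_sc_reach_mono (OTC M hMN), aux_sc_enabled_inr.2 hoo⟩
      | inl t =>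
        obtain ⟨M2, hM2, hen⟩ := ND t
        have h1 : unitM W.o ∈ reach (shortCircuit W.net W.i W.o) M :=
          aux_sc_reach_mono (OTC M hMN)
        have h2 : unitM W.i ∈ reach (shortCircuit W.net W.i W.o) (unitM W.o) := by
          refine ⟨[Sum.inr ()], ?_⟩
          have h3 := Fires.cons ((aux_sc_enabled_inr (N := W.net) (i := W.i)).2 hoo)
            (Fires.nil ((shortCircuit W.net W.i W.o).fire (unitM W.o) (Sum.inr ())))
          rwa [aux_sc_fire_inr_final] at h3
        exact ⟨M2, aux_reach_trans h1 (aux_reach_trans h2 (aux_sc_reach_mono hM2)),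
          aux_sc_enabled_inl.2 hen⟩
    · -- Bounded
      have hfin : (reach W.net (unitM W.i)).Finite := by
        by_contra hinf
        obtain ⟨M, M', hM, hM', hle, hne⟩ := aux_selfcover hinf
        obtain ⟨ρ, hρ⟩ := OTC M hM
        set d : P → ℕ := fun p => M' p - M p with hd
        have hM'eq : M' = fun p => M p + d p := by
          funext p; have := hle p; simp only [hd]; omega
        have h2 := aux_fires_add d hρ
        rw [← hM'eq] at h2
        have hX : (fun p => unitM W.o p + d p) ∈ reach W.net (unitM W.i) :=
          aux_reach_trans hM (aux_reach_trans hM' ⟨ρ, h2⟩)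
        have hXo := PC _ hX (fun p => Nat.le_add_right _ _)
        have hd0 : ∀ p, d p = 0 := by
          intro p
          have h5 := congrFun hXo p
          omega
        apply hne
        rw [hM'eq]
        funext p
        simp [hd0 p]
      refine ⟨hfin.toFinset.sup (fun M => Finset.univ.sup M), ?_⟩
      intro M hM p
      have hMN := hsub M hM
      calc M p ≤ Finset.univ.sup M := Finset.le_sup (Finset.mem_univ p)
        _ ≤ _ := Finset.le_sup (hfin.mem_toFinset.2 hMN)
  · rintro ⟨hL, b, hB⟩
    have PC := aux_PC hB
    have OTC : ∀ M ∈ reach W.net (unitM W.i), unitM W.o ∈ reach W.net M := by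
      intro M hM
      obtain ⟨M', hM', hen⟩ := hL M (aux_sc_reach_mono hM) (Sum.inr ())
      obtain ⟨σ, hσ⟩ := hM'
      obtain ⟨M'', hM'', ho⟩ := aux_oToken hσ (aux_sc_enabled_inr.1 hen)
      have hMo : M'' = unitM W.o := by
        refine PC M'' (aux_reach_trans hM hM'') (fun p => ?_)
        simp only [unitM]
        split_ifs with h
        · subst h; exact ho
        · exact Nat.zero_le _
      rw [← hMo]
      exact hM''
    refine ⟨OTC, PC, ?_⟩
    intro t
    obtain ⟨M', hM', hen⟩ := hL (unitM W.i) (aux_reach_self _) (Sum.inl t)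
    obtain ⟨σ, hσ⟩ := hM'
    exact ⟨M', aux_reach_sub PC hσ (aux_reach_self _), aux_sc_enabled_inl.1 hen⟩
end
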